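/- For nonnegative random variables X and Y with joint distribution function F(u,v), define U(x,y) = ∫₀^x ∫₀^y P(X > u, Y > v) du dv and W(x,y) = ∫₀^x ∫₀^y uv dF(u,v) = E[XY·1{X ≤ x, Y ≤ y}]. Then |W(x,y) − U(x,y)| ≤ 2xy P(X > x) + 2xy P(Y > y) for all x, y > 0. -/

import Mathlib

/-!
Tonelli's theorem turns `U(x, y)` into `E[min(X, x) · min(Y, y)]`, because
`∫₀^x 1{u < X} du = min(X, x)`. The integrand `min(X, x) · min(Y, y)` equals `X · Y` on
`{X ≤ x, Y ≤ y}` and lies in `[0, x y]` off it, so `|W − U| ≤ x y P(X > x or Y > y)`.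
-/

open MeasureTheory Set Function
open scoped ENNReal NNReal

theorem lintegral_Ioc_indicator_Iio (c x a : ℝ) :
    ∫⁻ u in Ioc c x, (Iio a).indicator 1 u = ENNReal.ofReal (min a x - c) := by
  rw [lintegral_indicator_one measurableSet_Iio, Measure.restrict_apply measurableSet_Iio]
  rcases le_or_gt a x with hax | hxa
  · have : Iio a ∩ Ioc c x = Ioo c a := by
      ext u; simp only [mem_inter_iff, mem_Ioc, mem_Iio, mem_Ioo]
      exact ⟨fun h => ⟨h.2.1, h.1⟩, fun h => ⟨h.2, h.1, h.2.le.trans hax⟩⟩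
    rw [this, Real.volume_Ioo, min_eq_left hax]
  · rw [inter_eq_self_of_subset_right fun u hu => hu.2.trans_lt hxa, Real.volume_Ioc,
      min_eq_right hxa.le]

theorem measurable_uncurry_indicator_Iio {Ω : Type*} [MeasurableSpace Ω] {X : Ω → ℝ}
    (hX : Measurable X) :
    Measurable (uncurry fun u ω => (Iio (X ω)).indicator (1 : ℝ → ℝ≥0∞) u) := by
  have : MeasurableSet {p : ℝ × Ω | p.1 < X p.2} := measurableSet_lt (by fun_prop) (by fun_prop)
  exact (measurable_one.indicator this :
    Measurable ({p : ℝ × Ω | p.1 < X p.2}.indicator (1 : ℝ × Ω → ℝ≥0∞)))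

theorem measure_lt_and_lt_eq_lintegral {Ω : Type*} [MeasurableSpace Ω] (P : Measure Ω)
    {X Y : Ω → ℝ} (hX : Measurable X) (hY : Measurable Y) (u v : ℝ) :
    P {ω | u < X ω ∧ v < Y ω} =
      ∫⁻ ω, (Iio (X ω)).indicator 1 u * (Iio (Y ω)).indicator 1 v ∂P := by
  have hs : MeasurableSet {ω | u < X ω ∧ v < Y ω} :=
    (measurableSet_lt measurable_const hX).inter (measurableSet_lt measurable_const hY)
  rw [← lintegral_indicator_one hs]
  congr 1 with ω
  by_cases hu : u < X ω <;> by_cases hv : v < Y ω <;> simp [hu, hv]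

theorem lintegral_lintegral_lintegral_mul {α β Ω : Type*} [MeasurableSpace α]
    [MeasurableSpace β] [MeasurableSpace Ω] {μ : Measure α} {ν : Measure β} {P : Measure Ω}
    [SFinite μ] [SFinite ν] [SFinite P] {f : α → Ω → ℝ≥0∞} {g : β → Ω → ℝ≥0∞}
    (hf : Measurable (uncurry f)) (hg : Measurable (uncurry g)) :
    ∫⁻ a, ∫⁻ b, ∫⁻ ω, f a ω * g b ω ∂P ∂ν ∂μ =
      ∫⁻ ω, (∫⁻ a, f a ω ∂μ) * ∫⁻ b, g b ω ∂ν ∂P := by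
  calc ∫⁻ a, ∫⁻ b, ∫⁻ ω, f a ω * g b ω ∂P ∂ν ∂μ
      = ∫⁻ a, ∫⁻ ω, f a ω * ∫⁻ b, g b ω ∂ν ∂P ∂μ := by
        refine lintegral_congr fun a => ?_
        rw [lintegral_lintegral_swap (by fun_prop)]
        exact lintegral_congr fun ω => lintegral_const_mul _ (by fun_prop)
    _ = ∫⁻ ω, (∫⁻ a, f a ω ∂μ) * ∫⁻ b, g b ω ∂ν ∂P := by
        rw [lintegral_lintegral_swap (by fun_prop)]
        exact lintegral_congr fun ω => lintegral_mul_const _ (by fun_prop)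

theorem lintegral_Ioc_lintegral_Ioc_measure_lt_and_lt {Ω : Type*} [MeasurableSpace Ω]
    (P : Measure Ω) [SFinite P] {X Y : Ω → ℝ} (hX : Measurable X) (hY : Measurable Y)
    (x y : ℝ) :
    ∫⁻ u in Ioc 0 x, ∫⁻ v in Ioc 0 y, P {ω | u < X ω ∧ v < Y ω} =
      ∫⁻ ω, ENNReal.ofReal (min (X ω) x) * ENNReal.ofReal (min (Y ω) y) ∂P := by
  simp_rw [measure_lt_and_lt_eq_lintegral P hX hY,
    lintegral_lintegral_lintegral_mul (measurable_uncurry_indicator_Iio hX)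
      (measurable_uncurry_indicator_Iio hY), lintegral_Ioc_indicator_Iio, sub_zero]

theorem intervalIntegral_intervalIntegral_toReal {G : ℝ → ℝ → ℝ≥0∞}
    (hG : Measurable (uncurry G)) {C : ℝ≥0} (hGC : ∀ u v, G u v ≤ C)
    {a b c d : ℝ} (hab : a ≤ b) (hcd : c ≤ d) :
    ∫ u in a..b, ∫ v in c..d, (G u v).toReal =
      (∫⁻ u in Ioc a b, ∫⁻ v in Ioc c d, G u v).toReal := by
  have hinner_meas : Measurable fun u => ∫⁻ v in Ioc c d, G u v := hG.lintegral_prod_right'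
  have hinner_lt : ∀ u, ∫⁻ v in Ioc c d, G u v < ∞ := fun u =>
    setLIntegral_lt_top_of_le_nnreal measure_Ioc_lt_top.ne ⟨C, fun v _ => hGC u v⟩
  simp_rw [intervalIntegral.integral_of_le hab, intervalIntegral.integral_of_le hcd]
  rw [← integral_toReal hinner_meas.aemeasurable (ae_of_all _ hinner_lt)]
  refine setIntegral_congr_fun measurableSet_Ioc fun u _ => ?_
  exact integral_toReal (by fun_prop) (ae_of_all _ fun v => (hGC u v).trans_lt ENNReal.coe_lt_top)

theorem intervalIntegral_intervalIntegral_measure_lt_and_lt {Ω : Type*} [MeasurableSpace Ω]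
    (P : Measure Ω) [IsFiniteMeasure P] {X Y : Ω → ℝ} (hX : Measurable X) (hY : Measurable Y)
    (hXnn : ∀ ω, 0 ≤ X ω) (hYnn : ∀ ω, 0 ≤ Y ω) {x y : ℝ} (hx : 0 ≤ x) (hy : 0 ≤ y) :
    ∫ u in (0:ℝ)..x, ∫ v in (0:ℝ)..y, (P {ω | u < X ω ∧ v < Y ω}).toReal =
      ∫ ω, min (X ω) x * min (Y ω) y ∂P := by
  have hG : Measurable (uncurry fun u v => P {ω | u < X ω ∧ v < Y ω}) :=
    measurable_measure_prodMk_left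
      ((measurableSet_lt (by fun_prop) (by fun_prop) :
          MeasurableSet {q : (ℝ × ℝ) × Ω | q.1.1 < X q.2}).inter
        (measurableSet_lt (by fun_prop) (by fun_prop) :
          MeasurableSet {q : (ℝ × ℝ) × Ω | q.1.2 < Y q.2}))
  have hGC : ∀ u v, P {ω | u < X ω ∧ v < Y ω} ≤ (P univ).toNNReal := fun u v => by
    rw [ENNReal.coe_toNNReal (measure_ne_top P univ)]
    exact measure_mono (subset_univ _)
  rw [intervalIntegral_intervalIntegral_toReal hG hGC hx hy,
    lintegral_Ioc_lintegral_Ioc_measure_lt_and_lt P hX hY,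
    integral_eq_lintegral_of_nonneg_ae (ae_of_all _ fun ω => by
      have := hXnn ω; have := hYnn ω; positivity) (by fun_prop)]
  congr 2 with ω
  exact (ENNReal.ofReal_mul (le_min (hXnn ω) hx)).symm

theorem abs_setIntegral_mul_sub_integral_min_mul_min_le {Ω : Type*} [MeasurableSpace Ω]
    (P : Measure Ω) [IsFiniteMeasure P] {X Y : Ω → ℝ} (hX : Measurable X) (hY : Measurable Y)
    (hXnn : ∀ ω, 0 ≤ X ω) (hYnn : ∀ ω, 0 ≤ Y ω) {x y : ℝ} (hx : 0 ≤ x) (hy : 0 ≤ y) :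
    |(∫ ω in {ω | X ω ≤ x ∧ Y ω ≤ y}, X ω * Y ω ∂P) - ∫ ω, min (X ω) x * min (Y ω) y ∂P| ≤
      x * y * P.real {ω | x < X ω} + x * y * P.real {ω | y < Y ω} := by
  set S := {ω | X ω ≤ x ∧ Y ω ≤ y}
  have hS : MeasurableSet S :=
    (measurableSet_le hX measurable_const).inter (measurableSet_le hY measurable_const)
  have hbound : ∀ ω, ‖min (X ω) x * min (Y ω) y‖ ≤ x * y := fun ω => by
    rw [norm_mul, Real.norm_of_nonneg (le_min (hXnn ω) hx),
      Real.norm_of_nonneg (le_min (hYnn ω) hy)]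
    exact mul_le_mul (min_le_right _ _) (min_le_right _ _) (le_min (hYnn ω) hy) hx
  have hint : Integrable (fun ω => min (X ω) x * min (Y ω) y) P :=
    .of_bound (by fun_prop) _ (ae_of_all _ hbound)
  have hS_eq : ∫ ω in S, X ω * Y ω ∂P = ∫ ω in S, min (X ω) x * min (Y ω) y ∂P :=
    setIntegral_congr_fun hS fun ω hω => by rw [min_eq_left hω.1, min_eq_left hω.2]
  have hSc : Sᶜ ⊆ {ω | x < X ω} ∪ {ω | y < Y ω} := fun ω hω => by
    simpa [S] using not_and_or.mp hω
  calc |(∫ ω in S, X ω * Y ω ∂P) - ∫ ω, min (X ω) x * min (Y ω) y ∂P|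
      = ‖(∫ ω, min (X ω) x * min (Y ω) y ∂P) - ∫ ω in S, min (X ω) x * min (Y ω) y ∂P‖ := by
        rw [hS_eq, abs_sub_comm, Real.norm_eq_abs]
    _ ≤ P.real Sᶜ * (x * y) := norm_integral_sub_setIntegral_le (ae_of_all _ hbound) hS hint
    _ ≤ (P.real {ω | x < X ω} + P.real {ω | y < Y ω}) * (x * y) := by
        gcongr
        exact (measureReal_mono hSc).trans (measureReal_union_le _ _)
    _ = x * y * P.real {ω | x < X ω} + x * y * P.real {ω | y < Y ω} := by ring

/-- For nonnegative random variables `X, Y`, with `U` the double integral of the joint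
survival function and `W` the truncated mixed second moment,
`|W(x,y) − U(x,y)| ≤ 2xy P(X > x) + 2xy P(Y > y)` for all `x, y > 0`. -/
theorem stmt_2 {Ω : Type*} [MeasurableSpace Ω] (P : Measure Ω) [IsProbabilityMeasure P]
    (X Y : Ω → ℝ) (hX : Measurable X) (hY : Measurable Y)
    (hXnn : ∀ ω, 0 ≤ X ω) (hYnn : ∀ ω, 0 ≤ Y ω)
    (x y : ℝ) (hx : 0 < x) (hy : 0 < y) :
    |(∫ ω in {ω | X ω ≤ x ∧ Y ω ≤ y}, X ω * Y ω ∂P) -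
        (∫ u in (0:ℝ)..x, ∫ v in (0:ℝ)..y, (P {ω | u < X ω ∧ v < Y ω}).toReal)| ≤
      2 * x * y * (P {ω | x < X ω}).toReal + 2 * x * y * (P {ω | y < Y ω}).toReal := by
  rw [intervalIntegral_intervalIntegral_measure_lt_and_lt P hX hY hXnn hYnn hx.le hy.le]
  refine (abs_setIntegral_mul_sub_integral_min_mul_min_le P hX hY hXnn hYnn hx.le hy.le).trans ?_
  have hXx : 0 ≤ x * y * P.real {ω | x < X ω} := by positivity
  have hYy : 0 ≤ x * y * P.real {ω | y < Y ω} := by positivity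
  simp only [measureReal_def] at hXx hYy ⊢
  linarith
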